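/- arXiv:2107.05706 — 5 statements merged into one kernel-verified Lean document; each statement's English description precedes it below -/
import Mathlib

section
/- Let n ≥ 1 and let γ_{ij} = γ_{ji} > 0 be given positive real numbers for 1 ≤ i < j ≤ n+1 (with γ_{ii} = 0). Then there exist linearly independent vectors v_1, …, v_{n+1} in ℝ^{n+1}, each lying on the upper sheet of the hyperboloid (i.e. ⟨v_i, v_i⟩ = −1 and the (n+1)-st coordinate of each v_i is positive), with hyperbolic distance d_ℍ(v_i, v_j) = arccosh(−⟨v_i, v_j⟩) = γ_{ij} for all i < j, if and only if the (n+1)×(n+1) symmetric matrix Q_Σ with entries (Q_Σ)_{ij} = −cosh(γ_{ij}) (so all diagonal entries equal −1) has signature (n,1), i.e. Q_Σ has exactly n positive eigenvalues and exactly one negative eigenvalue. -/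
open Finset
open Matrix

/-- The Minkowski bilinear form of signature `(n,1)` on `ℝ^{n+1}`:
`⟨x, y⟩ = x₁y₁ + ⋯ + xₙyₙ − x_{n+1}y_{n+1}`. -/
noncomputable def mink (n : ℕ) (x y : Fin (n + 1) → ℝ) : ℝ :=
  (∑ i : Fin n, x i.castSucc * y i.castSucc) - x (Fin.last n) * y (Fin.last n)

/-- The inverse hyperbolic cosine, `arccosh x = log (x + √(x² − 1))`. -/
noncomputable def arccosh (x : ℝ) : ℝ := Real.log (x + Real.sqrt (x ^ 2 - 1))

noncomputable def hr_eps (n : ℕ) (k : Fin (n+1)) : ℝ := if k = Fin.last n then -1 else 1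

lemma hr_eps_castSucc (n : ℕ) (i : Fin n) : hr_eps n i.castSucc = 1 :=
  if_neg (Fin.castSucc_lt_last i).ne

lemma hr_eps_last (n : ℕ) : hr_eps n (Fin.last n) = -1 := if_pos rfl

lemma hr_eps_of_ne {n : ℕ} {k : Fin (n+1)} (h : k ≠ Fin.last n) : hr_eps n k = 1 := if_neg h

lemma mink_eq_sum (n : ℕ) (x y : Fin (n+1) → ℝ) :
    mink n x y = ∑ k, hr_eps n k * (x k * y k) := by
  rw [Fin.sum_univ_castSucc]
  simp only [mink, hr_eps_castSucc, hr_eps_last, one_mul]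
  ring

lemma arccosh_cosh {t : ℝ} (h : 0 ≤ t) : arccosh (Real.cosh t) = t := by
  have h1 : Real.cosh t ^ 2 - 1 = Real.sinh t ^ 2 := by
    rw [Real.cosh_sq]; ring
  rw [arccosh, h1, Real.sqrt_sq (Real.sinh_nonneg_iff.mpr h), Real.cosh_add_sinh, Real.log_exp]

lemma eq_cosh_of_arccosh {x t : ℝ} (ht : 0 < t) (h : arccosh x = t) : x = Real.cosh t := by
  rcases le_or_gt 1 x with hx | hx
  · have h2 : (0:ℝ) ≤ x ^ 2 - 1 := by nlinarith
    set s := Real.sqrt (x ^ 2 - 1) with hs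
    have hs0 : 0 ≤ s := Real.sqrt_nonneg _
    have hs2 : s ^ 2 = x ^ 2 - 1 := Real.sq_sqrt h2
    have hxs : 0 < x + s := by nlinarith
    have hexp : x + s = Real.exp t := by
      rw [← h, arccosh, ← hs, Real.exp_log hxs]
    have hexp' : x - s = Real.exp (-t) := by
      have h3 : (x + s) * (x - s) = 1 := by nlinarith
      have h4 : Real.exp t * Real.exp (-t) = 1 := by
        rw [← Real.exp_add]; simp
      rw [hexp] at h3
      have h5 : (0:ℝ) < Real.exp t := Real.exp_pos t
      nlinarith [h3, h4]
    rw [Real.cosh_eq]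
    nlinarith [hexp, hexp']
  · exfalso
    set s := Real.sqrt (x ^ 2 - 1) with hs
    have hs0 : 0 ≤ s := Real.sqrt_nonneg _
    have habs : |x + s| ≤ 1 := by
      rcases le_or_gt (x ^ 2) 1 with h2 | h2
      · have hz : s = 0 := Real.sqrt_eq_zero'.mpr (by linarith)
        rw [hz, add_zero]
        exact abs_le.mpr ⟨by nlinarith, by nlinarith⟩
      · have hxneg : x < -1 := by nlinarith
        have hs2 : s ^ 2 = x ^ 2 - 1 := Real.sq_sqrt (by linarith)
        have hslt : s < -x := by nlinarith
        have hsge : -x - 1 ≤ s := by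
          rw [hs, Real.le_sqrt (by linarith) (by linarith)]
          nlinarith
        exact abs_le.mpr ⟨by linarith, by linarith⟩
    have hle : arccosh x ≤ 0 := by
      rw [arccosh, ← Real.log_abs]
      exact Real.log_nonpos (abs_nonneg _) habs
    linarith [h ▸ hle]

lemma same_sheet (n : ℕ) {x y : Fin (n+1) → ℝ} (hx : mink n x x = -1)
    (hy : mink n y y = -1) (hxy : mink n x y < 0) :
    0 < x (Fin.last n) * y (Fin.last n) := by
  have cs := Finset.sum_mul_sq_le_sq_mul_sq univ (fun i : Fin n => x i.castSucc)
    (fun i : Fin n => y i.castSucc)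
  have hsx : 0 ≤ ∑ i : Fin n, x i.castSucc ^ 2 :=
    Finset.sum_nonneg fun i _ => sq_nonneg _
  have hsy : 0 ≤ ∑ i : Fin n, y i.castSucc ^ 2 :=
    Finset.sum_nonneg fun i _ => sq_nonneg _
  have hx' : ∑ i : Fin n, x i.castSucc ^ 2 = x (Fin.last n) ^ 2 - 1 := by
    have h := hx; rw [mink] at h
    have e : ∀ i : Fin n, x i.castSucc * x i.castSucc = x i.castSucc ^ 2 := fun i => (sq _).symm
    rw [Finset.sum_congr rfl fun i _ => e i] at h
    nlinarith [h]
  have hy' : ∑ i : Fin n, y i.castSucc ^ 2 = y (Fin.last n) ^ 2 - 1 := by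
    have h := hy; rw [mink] at h
    have e : ∀ i : Fin n, y i.castSucc * y i.castSucc = y i.castSucc ^ 2 := fun i => (sq _).symm
    rw [Finset.sum_congr rfl fun i _ => e i] at h
    nlinarith [h]
  rw [mink] at hxy
  rw [hx'] at cs hsx
  rw [hy'] at cs hsy
  set s := ∑ i : Fin n, x i.castSucc * y i.castSucc with hsdef
  set a := x (Fin.last n)
  set b := y (Fin.last n)
  by_contra hcon
  push_neg at hcon
  nlinarith [cs, hxy, hcon, sq_nonneg (s - a*b), sq_nonneg (s + a*b)]

lemma quad_swap {ι κ : Type*} [Fintype ι] [Fintype κ] (c : ι → ℝ) (w : ι → κ → ℝ) (d : κ → ℝ) :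
    ∑ i, ∑ j, c i * c j * (∑ k, d k * (w i k * w j k))
      = ∑ k, d k * (∑ i, c i * w i k) ^ 2 := by
  have rhs : ∀ k : κ, d k * (∑ i, c i * w i k) ^ 2
      = ∑ i, ∑ j, c i * c j * (d k * (w i k * w j k)) := by
    intro k
    rw [sq, Finset.sum_mul_sum, Finset.mul_sum]
    refine Finset.sum_congr rfl fun i _ => ?_
    rw [Finset.mul_sum]
    exact Finset.sum_congr rfl fun j _ => by ring
  calc ∑ i, ∑ j, c i * c j * (∑ k, d k * (w i k * w j k))
      = ∑ i, ∑ j, ∑ k, c i * c j * (d k * (w i k * w j k)) :=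
        Finset.sum_congr rfl fun i _ => Finset.sum_congr rfl fun j _ => Finset.mul_sum ..
    _ = ∑ i, ∑ k, ∑ j, c i * c j * (d k * (w i k * w j k)) :=
        Finset.sum_congr rfl fun i _ => Finset.sum_comm
    _ = ∑ k, ∑ i, ∑ j, c i * c j * (d k * (w i k * w j k)) := Finset.sum_comm
    _ = ∑ k, d k * (∑ i, c i * w i k) ^ 2 :=
        Finset.sum_congr rfl fun k _ => (rhs k).symm

set_option maxHeartbeats 2000000 in
/-- **Realizability of hyperbolic simplices.**
Positive reals `γ i j` (symmetric, vanishing on the diagonal) are the edge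
lengths of a non-degenerate hyperbolic `n`-simplex, i.e. there are linearly
independent vectors `v 1, …, v (n+1)` on the upper sheet of the hyperboloid
with pairwise hyperbolic distances `γ i j`, if and only if the matrix
`Q_Σ` with entries `−cosh (γ i j)` has signature `(n, 1)`, i.e. exactly `n`
positive eigenvalues and exactly one negative eigenvalue. -/
theorem hyperbolic_realizability (n : ℕ) (hn : 1 ≤ n)
    (γ : Fin (n + 1) → Fin (n + 1) → ℝ)
    (hsym : ∀ i j, γ i j = γ j i) (hdiag : ∀ i, γ i i = 0)
    (hpos : ∀ i j, i < j → 0 < γ i j)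
    (Qsig : Matrix (Fin (n + 1)) (Fin (n + 1)) ℝ)
    (hQ : ∀ i j, Qsig i j = -Real.cosh (γ i j))
    (hherm : Qsig.IsHermitian) :
    (∃ v : Fin (n + 1) → (Fin (n + 1) → ℝ),
        LinearIndependent ℝ v ∧
        (∀ i, mink n (v i) (v i) = -1) ∧
        (∀ i, 0 < v i (Fin.last n)) ∧
        (∀ i j, i < j → arccosh (-(mink n (v i) (v j))) = γ i j))
      ↔ ((univ.filter fun i => 0 < hherm.eigenvalues i).card = n ∧
         (univ.filter fun i => hherm.eigenvalues i < 0).card = 1) := by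
  classical
  set lam := hherm.eigenvalues with hlam
  set V : Matrix (Fin (n+1)) (Fin (n+1)) ℝ :=
    (hherm.eigenvectorUnitary : Matrix (Fin (n+1)) (Fin (n+1)) ℝ) with hV
  have hst : star V = Vᵀ := by
    ext i j
    simp [Matrix.star_apply]
  have hunit : V * Vᵀ = 1 := by
    rw [← hst]
    exact (Matrix.mem_unitaryGroup_iff).mp (hherm.eigenvectorUnitary).2
  have hunit' : Vᵀ * V = 1 := by
    rw [← hst]
    exact (Matrix.mem_unitaryGroup_iff').mp (hherm.eigenvectorUnitary).2
  have hspec : Qsig = V * Matrix.diagonal lam * Vᵀ := by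
    rw [← hst]
    have := hherm.spectral_theorem
    rw [RCLike.ofReal_real_eq_id] at this
    simpa using this
  have hentry : ∀ i j, Qsig i j = ∑ t, lam t * (V i t * V j t) := by
    intro i j
    rw [hspec, Matrix.mul_apply]
    refine Finset.sum_congr rfl fun t _ => ?_
    rw [Matrix.mul_diagonal, Matrix.transpose_apply]
    ring
  have hcol : ∀ s t, (∑ i, V i s * V i t) = if s = t then (1:ℝ) else 0 := by
    intro s t
    have h := congrFun (congrFun hunit' s) t
    rw [Matrix.mul_apply] at h
    simp only [Matrix.transpose_apply] at h
    rw [h, Matrix.one_apply]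
  have hrow : ∀ i j, (∑ t, V i t * V j t) = if i = j then (1:ℝ) else 0 := by
    intro i j
    have h := congrFun (congrFun hunit i) j
    rw [Matrix.mul_apply] at h
    simp only [Matrix.transpose_apply] at h
    rw [h, Matrix.one_apply]
  have hdetQ : Qsig.det = ∏ i, lam i := by
    have := hherm.det_eq_prod_eigenvalues
    simpa using this
  constructor
  · rintro ⟨v, hli, hvv, hup, hdist⟩
    have hmsym : ∀ i j, mink n (v i) (v j) = mink n (v j) (v i) := by
      intro i j
      rw [mink_eq_sum, mink_eq_sum]
      exact Finset.sum_congr rfl fun k _ => by ring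
    have hQm : ∀ i j, Qsig i j = mink n (v i) (v j) := by
      intro i j
      rcases lt_trichotomy i j with h | h | h
      · have h2 := eq_cosh_of_arccosh (hpos i j h) (hdist i j h)
        rw [hQ, ← h2]; ring
      · subst h
        rw [hQ, hdiag, Real.cosh_zero, hvv i]
      · have h2 := eq_cosh_of_arccosh (hpos j i h) (hdist j i h)
        rw [hQ, hsym i j, hmsym i j, ← h2]; ring
    have hQsum : ∀ i j, Qsig i j = ∑ k, hr_eps n k * (v i k * v j k) := fun i j =>
      (hQm i j).trans (mink_eq_sum n (v i) (v j))
    set A : Matrix (Fin (n+1)) (Fin (n+1)) ℝ := Matrix.of v with hA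
    have hdetA : A.det ≠ 0 := by
      have h1 : LinearIndependent ℝ (fun i => A i) := hli
      have h2 := Matrix.linearIndependent_rows_iff_isUnit.mp h1
      exact isUnit_iff_ne_zero.mp (Matrix.isUnit_iff_isUnit_det A |>.mp h2)
    have hQfact : Qsig = A * Matrix.diagonal (hr_eps n) * Aᵀ := by
      ext i j
      rw [hQsum i j, Matrix.mul_apply]
      refine Finset.sum_congr rfl fun k _ => ?_
      rw [Matrix.mul_diagonal, Matrix.transpose_apply]
      show hr_eps n k * (v i k * v j k) = v i k * hr_eps n k * v j k
      ring
    have hprodeps : ∏ k, hr_eps n k = -1 := by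
      rw [Fin.prod_univ_castSucc]
      simp [hr_eps_castSucc, hr_eps_last]
    have hdetneg : Qsig.det < 0 := by
      rw [hQfact, Matrix.det_mul, Matrix.det_mul, Matrix.det_transpose, Matrix.det_diagonal,
        hprodeps]
      have h2 : 0 < A.det ^ 2 := by positivity
      nlinarith [h2]
    have hprodlam : ∏ t, lam t < 0 := by rw [← hdetQ]; exact hdetneg
    have hne : ∀ t, lam t ≠ 0 := by
      intro t ht
      rw [Finset.prod_eq_zero (mem_univ t) ht] at hprodlam
      exact lt_irrefl 0 hprodlam
    have hkey : ∀ p q : Fin (n+1), lam p < 0 → lam q < 0 → p = q := by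
      intro p q hp hq
      by_contra hpq
      have main : ∀ a b : ℝ,
          a * (∑ i, V i p * v i (Fin.last n)) + b * (∑ i, V i q * v i (Fin.last n)) = 0 →
          0 ≤ lam p * a ^ 2 + lam q * b ^ 2 := by
        intro a b hab
        set c : Fin (n+1) → ℝ := fun i => a * V i p + b * V i q with hc
        have Sw1 : ∑ i, ∑ j, c i * c j * Qsig i j
            = ∑ t, lam t * (∑ i, c i * V i t) ^ 2 := by
          rw [Finset.sum_congr rfl fun i _ => Finset.sum_congr rfl fun j _ => by
            rw [hentry i j]]
          exact quad_swap c (fun i t => V i t) lam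
        have Sw2 : ∑ i, ∑ j, c i * c j * Qsig i j
            = ∑ k, hr_eps n k * (∑ i, c i * v i k) ^ 2 := by
          rw [Finset.sum_congr rfl fun i _ => Finset.sum_congr rfl fun j _ => by
            rw [hQsum i j]]
          exact quad_swap c v (hr_eps n)
        have hct : ∀ t, ∑ i, c i * V i t
            = a * (if p = t then (1:ℝ) else 0) + b * (if q = t then (1:ℝ) else 0) := by
          intro t
          have h1 : ∑ i, c i * V i t
              = a * (∑ i, V i p * V i t) + b * (∑ i, V i q * V i t) := by
            rw [Finset.mul_sum, Finset.mul_sum, ← Finset.sum_add_distrib]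
            exact Finset.sum_congr rfl fun i _ => by rw [hc]; ring
          rw [h1, hcol p t, hcol q t]
        have hterm : ∀ t, lam t * (∑ i, c i * V i t) ^ 2
            = (if p = t then lam t * a ^ 2 else 0) + (if q = t then lam t * b ^ 2 else 0) := by
          intro t
          rw [hct t]
          by_cases h1 : p = t <;> by_cases h2 : q = t
          · exact absurd (h1.trans h2.symm) hpq
          · simp [h1, h2]
          · simp [h1, h2]
          · simp [h1, h2]
        have hS1 : ∑ i, ∑ j, c i * c j * Qsig i j = lam p * a ^ 2 + lam q * b ^ 2 := by
          rw [Sw1, Finset.sum_congr rfl fun t _ => hterm t, Finset.sum_add_distrib]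
          rw [Finset.sum_ite_eq univ p (fun t => lam t * a ^ 2),
            Finset.sum_ite_eq univ q (fun t => lam t * b ^ 2)]
          simp
        have hxlast : ∑ i, c i * v i (Fin.last n) = 0 := by
          have h1 : ∑ i, c i * v i (Fin.last n)
              = a * (∑ i, V i p * v i (Fin.last n)) + b * (∑ i, V i q * v i (Fin.last n)) := by
            rw [Finset.mul_sum, Finset.mul_sum, ← Finset.sum_add_distrib]
            exact Finset.sum_congr rfl fun i _ => by rw [hc]; ring
          rw [h1, hab]
        have hS2 : 0 ≤ ∑ i, ∑ j, c i * c j * Qsig i j := by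
          rw [Sw2, Fin.sum_univ_castSucc, hxlast]
          simp only [hr_eps_castSucc, hr_eps_last, one_mul]
          have : (0:ℝ) ≤ ∑ k : Fin n, (∑ i, c i * v i k.castSucc) ^ 2 :=
            Finset.sum_nonneg fun k _ => sq_nonneg _
          nlinarith [this]
        linarith [hS1 ▸ hS2]
      set P : ℝ := ∑ i, V i p * v i (Fin.last n) with hP
      set R : ℝ := ∑ i, V i q * v i (Fin.last n) with hR
      by_cases hPR : P = 0 ∧ R = 0
      · have h0 := main 1 0 (by rw [hPR.1, hPR.2]; ring)
        nlinarith [h0]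
      · have h0 := main R (-P) (by ring)
        rcases not_and_or.mp hPR with h | h
        · have : 0 < P ^ 2 := by positivity
          nlinarith [h0, this, sq_nonneg R]
        · have : 0 < R ^ 2 := by positivity
          nlinarith [h0, this, sq_nonneg P]
    have hnegcard : (univ.filter fun i => lam i < 0).card = 1 := by
      have hnonempty : ∃ t, lam t < 0 := by
        by_contra hno
        push_neg at hno
        have : 0 < ∏ t, lam t :=
          Finset.prod_pos fun t _ => lt_of_le_of_ne (hno t) (Ne.symm (hne t))
        linarith
      obtain ⟨t0, ht0⟩ := hnonempty
      rw [Finset.card_eq_one]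
      refine ⟨t0, ?_⟩
      ext t
      simp only [Finset.mem_filter, Finset.mem_univ, true_and, Finset.mem_singleton]
      exact ⟨fun h => hkey t t0 h ht0, fun h => h ▸ ht0⟩
    have hsplit := Finset.card_filter_add_card_filter_not
      (s := univ) (p := fun i : Fin (n+1) => lam i < 0)
    have heqf : (univ.filter fun i => 0 < lam i)
        = (univ.filter fun i : Fin (n+1) => ¬ lam i < 0) := by
      apply Finset.filter_congr
      intro i _
      simp only [not_lt, eq_iff_iff]
      exact ⟨le_of_lt, fun h => lt_of_le_of_ne h (Ne.symm (hne i))⟩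
    have hcard_univ : (univ : Finset (Fin (n+1))).card = n + 1 := by simp
    refine ⟨?_, hnegcard⟩
    rw [heqf]
    omega
  · rintro ⟨hcpos, hcneg⟩
    obtain ⟨i0, hi0⟩ := Finset.card_eq_one.mp hcneg
    have hi0neg : lam i0 < 0 := by
      have h1 : i0 ∈ univ.filter fun i => lam i < 0 := by
        rw [hi0]; exact Finset.mem_singleton_self i0
      exact (Finset.mem_filter.mp h1).2
    have hposrest : ∀ t, t ≠ i0 → 0 < lam t := by
      have hsub : (univ.filter fun i => 0 < lam i) ⊆ univ.erase i0 := by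
        intro t ht
        rw [Finset.mem_erase]
        refine ⟨?_, mem_univ t⟩
        rintro rfl
        exact absurd (Finset.mem_filter.mp ht).2 (not_lt.mpr hi0neg.le)
      have hcarde : (univ.erase i0).card = n := by
        rw [Finset.card_erase_of_mem (mem_univ _)]
        simp
      have heq : (univ.filter fun i => 0 < lam i) = univ.erase i0 :=
        Finset.eq_of_subset_of_card_le hsub (by rw [hcarde, hcpos])
      intro t ht
      have h1 : t ∈ univ.filter fun i => 0 < lam i := by
        rw [heq]; exact Finset.mem_erase.mpr ⟨ht, mem_univ t⟩
      exact (Finset.mem_filter.mp h1).2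
    have hne : ∀ t, lam t ≠ 0 := by
      intro t
      by_cases h : t = i0
      · rw [h]; exact hi0neg.ne
      · exact (hposrest t h).ne'
    set σ : Equiv.Perm (Fin (n+1)) := Equiv.swap i0 (Fin.last n) with hσ
    have hσlast : σ (Fin.last n) = i0 := Equiv.swap_apply_right i0 (Fin.last n)
    have hσne : ∀ k : Fin n, σ k.castSucc ≠ i0 := by
      intro k h
      have h2 : k.castSucc = Fin.last n := σ.injective (h.trans hσlast.symm)
      exact absurd h2 (Fin.castSucc_lt_last k).ne
    set d : Fin (n+1) → ℝ := fun k => Real.sqrt |lam (σ k)| with hd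
    have hdpos : ∀ k, 0 < d k := fun k =>
      Real.sqrt_pos.mpr (abs_pos.mpr (hne (σ k)))
    set v : Fin (n+1) → Fin (n+1) → ℝ := fun i k => d k * V i (σ k) with hv
    have hsign : ∀ k, hr_eps n k * (d k * d k) = lam (σ k) := by
      intro k
      have hdd : d k * d k = |lam (σ k)| := Real.mul_self_sqrt (abs_nonneg _)
      by_cases hk : k = Fin.last n
      · subst hk
        rw [hr_eps_last, hdd, hσlast, abs_of_neg hi0neg]; ring
      · have hne' : σ k ≠ i0 := fun h => hk (σ.injective (h.trans hσlast.symm))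
        rw [hr_eps_of_ne hk, hdd, abs_of_pos (hposrest _ hne'), one_mul]
    have hgram : ∀ i j, mink n (v i) (v j) = Qsig i j := by
      intro i j
      rw [mink_eq_sum]
      have hterm : ∀ k, hr_eps n k * (v i k * v j k)
          = lam (σ k) * (V i (σ k) * V j (σ k)) := by
        intro k
        rw [← hsign k]
        show hr_eps n k * (d k * V i (σ k) * (d k * V j (σ k)))
          = hr_eps n k * (d k * d k) * (V i (σ k) * V j (σ k))
        ring
      rw [Finset.sum_congr rfl fun k _ => hterm k]
      rw [Equiv.sum_comp σ (fun t => lam t * (V i t * V j t))]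
      exact (hentry i j).symm
    have hQneg : ∀ i j, Qsig i j < 0 := by
      intro i j
      rw [hQ]
      linarith [Real.one_le_cosh (γ i j)]
    have hdiagv : ∀ i, mink n (v i) (v i) = -1 := by
      intro i
      rw [hgram, hQ, hdiag, Real.cosh_zero]
    have hsheet : ∀ i, 0 < v i (Fin.last n) * v 0 (Fin.last n) := fun i =>
      same_sheet n (hdiagv i) (hdiagv 0) (by rw [hgram]; exact hQneg i 0)
    set ρ : ℝ := if 0 < v 0 (Fin.last n) then 1 else -1 with hρ
    have hρ2 : ρ * ρ = 1 := by
      by_cases h : 0 < v 0 (Fin.last n) <;> simp [hρ, h]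
    have hρv0 : 0 < ρ * v 0 (Fin.last n) := by
      by_cases h : 0 < v 0 (Fin.last n)
      · simpa [hρ, h]
      · have h0 : v 0 (Fin.last n) ≠ 0 := by
          intro hz
          have := hsheet 0
          rw [hz] at this
          simp at this
        have hlt : v 0 (Fin.last n) < 0 := lt_of_le_of_ne (not_lt.mp h) h0
        simp only [hρ, if_neg h]
        linarith
    set w : Fin (n+1) → Fin (n+1) → ℝ := fun i k => ρ * v i k with hw
    have hgw : ∀ i j, mink n (w i) (w j) = Qsig i j := by
      intro i j
      rw [mink_eq_sum]
      have hterm : ∀ k, hr_eps n k * (w i k * w j k) = hr_eps n k * (v i k * v j k) := by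
        intro k
        have e : hr_eps n k * (ρ * v i k * (ρ * v j k))
            = ρ * ρ * (hr_eps n k * (v i k * v j k)) := by ring
        show hr_eps n k * (ρ * v i k * (ρ * v j k)) = hr_eps n k * (v i k * v j k)
        rw [e, hρ2, one_mul]
      rw [Finset.sum_congr rfl fun k _ => hterm k, ← mink_eq_sum]
      exact hgram i j
    refine ⟨w, ?_, ?_, ?_, ?_⟩
    · apply Fintype.linearIndependent_iff.mpr
      intro g hg i
      have hg' : ∀ t, ∑ j, g j * V j t = 0 := by
        intro t
        have hk := congrFun hg (σ.symm t)
        simp only [Finset.sum_apply, Pi.smul_apply, smul_eq_mul, Pi.zero_apply] at hk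
        have hσs : σ (σ.symm t) = t := σ.apply_symm_apply t
        have hfac : ∑ j, g j * w j (σ.symm t)
            = (ρ * d (σ.symm t)) * ∑ j, g j * V j t := by
          rw [Finset.mul_sum]
          refine Finset.sum_congr rfl fun j _ => ?_
          show g j * (ρ * (d (σ.symm t) * V j (σ (σ.symm t))))
            = ρ * d (σ.symm t) * (g j * V j t)
          rw [hσs]; ring
        rw [hfac] at hk
        have hρd : ρ * d (σ.symm t) ≠ 0 := by
          have := hdpos (σ.symm t)
          have hρne : ρ ≠ 0 := by
            by_cases h : 0 < v 0 (Fin.last n) <;> simp [hρ, h]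
          positivity
        exact (mul_eq_zero.mp hk).resolve_left hρd
      have hgi : g i = ∑ t, (∑ j, g j * V j t) * V i t := by
        have h1 : ∑ t, (∑ j, g j * V j t) * V i t
            = ∑ j, g j * (∑ t, V j t * V i t) := by
          calc ∑ t, (∑ j, g j * V j t) * V i t
              = ∑ t, ∑ j, g j * V j t * V i t :=
                Finset.sum_congr rfl fun t _ => Finset.sum_mul ..
            _ = ∑ j, ∑ t, g j * V j t * V i t := Finset.sum_comm
            _ = ∑ j, g j * (∑ t, V j t * V i t) := by
                refine Finset.sum_congr rfl fun j _ => ?_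
                rw [Finset.mul_sum]
                exact Finset.sum_congr rfl fun t _ => by ring
        rw [h1]
        have h2 : ∀ j, g j * (∑ t, V j t * V i t) = if j = i then g j else 0 := by
          intro j
          rw [hrow j i]
          by_cases h : j = i <;> simp [h]
        rw [Finset.sum_congr rfl fun j _ => h2 j]
        simp
      rw [hgi, Finset.sum_congr rfl fun t _ => by rw [hg' t], Finset.sum_congr rfl
        fun t (_ : t ∈ univ) => zero_mul (V i t)]
      simp
    · intro i
      rw [hgw, hQ, hdiag, Real.cosh_zero]
    · intro i
      show 0 < ρ * v i (Fin.last n)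
      by_contra hc
      push_neg at hc
      have h1 : (ρ * v i (Fin.last n)) * (ρ * v 0 (Fin.last n)) ≤ 0 :=
        mul_nonpos_of_nonpos_of_nonneg hc hρv0.le
      nlinarith [hsheet i, hρ2, h1]
    · intro i j hij
      rw [hgw, hQ, neg_neg]
      exact arccosh_cosh (hpos i j hij).le
end

section
/- Let v_1, …, v_{n+1} be affinely independent points in Euclidean space ℝ^n (n ≥ 2). Let Q_τ be the n×n Gram matrix with entries (Q_τ)_{ij} = ⟨v_i − v_{n+1}, v_j − v_{n+1}⟩ for 1 ≤ i, j ≤ n, and let Q_{τ_{n+1}} be the (n−1)×(n−1) Gram matrix of the face with vertices v_1, …, v_n, namely (Q_{τ_{n+1}})_{ij} = ⟨v_i − v_n, v_j − v_n⟩ for 1 ≤ i, j ≤ n−1. Let p be the orthogonal projection of v_{n+1} onto the affine span of {v_1, …, v_n}. Then det(Q_τ) = ‖v_{n+1} − p‖² · det(Q_{τ_{n+1}}). -/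
/-!
Gram determinants are invariant under unitriangular changes of the family. Subtracting the edge
`v_n - v_{n+1}` from the other edges at `v_{n+1}` turns them into the face edges `v_i - v_n`,
followed by `v_n - v_{n+1}`. Subtracting from this last vector its component `v_n - p` in the face
direction leaves `p - v_{n+1}`, which is orthogonal to the face (first-order condition for the
nearest point `p`), so the Gram matrix becomes block diagonal with blocks `Q_{τ_{n+1}}` and
`‖v_{n+1} - p‖²`.
-/

open Finset Matrix
open scoped RealInnerProductSpace

namespace Matrix

variable {E : Type*} [NormedAddCommGroup E] [InnerProductSpace ℝ E]

theorem gram_sum_smul {ι κ : Type*} [Fintype κ] (A : Matrix ι κ ℝ) (v : κ → E) :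
    gram ℝ (fun i ↦ ∑ j, A i j • v j) = A * gram ℝ v * Aᵀ := by
  ext i j
  simp only [gram_apply, sum_inner, inner_sum, real_inner_smul_left, real_inner_smul_right,
    mul_apply, transpose_apply, sum_mul]
  refine sum_congr rfl fun k _ ↦ sum_congr rfl fun l _ ↦ ?_
  ring

theorem det_gram_sum_smul {ι : Type*} [Fintype ι] [DecidableEq ι] (A : Matrix ι ι ℝ)
    (v : ι → E) : (gram ℝ (fun i ↦ ∑ j, A i j • v j)).det = A.det ^ 2 * (gram ℝ v).det := by
  rw [gram_sum_smul, det_mul, det_mul, det_transpose]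
  ring

theorem det_gram_eq_of_sub_mem_span_Iio {ι : Type*} [Fintype ι] [DecidableEq ι] [LinearOrder ι]
    {v w : ι → E} (h : ∀ i, w i - v i ∈ Submodule.span ℝ (v '' Set.Iio i)) :
    (gram ℝ w).det = (gram ℝ v).det := by
  choose l hl hlw using fun i ↦ Finsupp.mem_span_image_iff_linearCombination ℝ |>.mp (h i)
  have hw : w = fun i ↦ ∑ j, (1 + of fun i j ↦ l i j) i j • v j := by
    funext i
    simp only [add_apply, one_apply, of_apply, add_smul, sum_add_distrib, ite_smul,
      one_smul, zero_smul, sum_ite_eq, mem_univ, if_true]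
    have hli := hlw i
    rw [Finsupp.linearCombination_apply, Finsupp.sum_fintype _ _ fun _ ↦ zero_smul ℝ (v _)] at hli
    rw [hli, add_sub_cancel]
  have hA : (1 + of fun i j ↦ l i j).det = 1 := by
    rw [det_of_isLowerTriangular]
    · refine prod_eq_one fun i _ ↦ ?_
      simp [(Finsupp.mem_supported' ℝ _).mp (hl i) i (lt_irrefl i)]
    · intro i j (hij : i < j)
      simp [(Finsupp.mem_supported' ℝ _).mp (hl i) j hij.not_gt, hij.ne]
  rw [hw, det_gram_sum_smul, hA, one_pow, one_mul]

theorem det_gram_eq_of_sub_mem_span_Ioi {ι : Type*} [Fintype ι] [DecidableEq ι] [LinearOrder ι]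
    {v w : ι → E} (h : ∀ i, w i - v i ∈ Submodule.span ℝ (v '' Set.Ioi i)) :
    (gram ℝ w).det = (gram ℝ v).det :=
  det_gram_eq_of_sub_mem_span_Iio (ι := ιᵒᵈ) h

theorem det_gram_snoc_of_forall_inner_eq_zero {n : ℕ} (f : Fin n → E) {y : E}
    (hy : ∀ i, ⟪f i, y⟫ = 0) :
    (gram ℝ (Fin.snoc f y : Fin (n + 1) → E)).det = ‖y‖ ^ 2 * (gram ℝ f).det := by
  rw [det_succ_row _ (Fin.last n), sum_eq_single (Fin.last n)]
  · have hface : (gram ℝ (Fin.snoc f y : Fin (n + 1) → E)).submatrix Fin.castSucc Fin.castSucc =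
        gram ℝ f := by
      ext i j
      simp [gram_apply]
    rw [Fin.succAbove_last, hface, gram_apply, Fin.snoc_last, real_inner_self_eq_norm_sq,
      ← two_mul, pow_mul, neg_one_sq, one_pow, one_mul]
  · intro j _ hj
    obtain ⟨i, rfl⟩ := Fin.exists_castSucc_eq.mpr hj
    rw [gram_apply, Fin.snoc_last, Fin.snoc_castSucc, real_inner_comm, hy, mul_zero, zero_mul]
  · simp

theorem det_gram_snoc {n : ℕ} (f : Fin n → E) {x p : E}
    (hp : p ∈ Submodule.span ℝ (Set.range f)) (hxp : ∀ i, ⟪f i, x - p⟫ = 0) :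
    (gram ℝ (Fin.snoc f x : Fin (n + 1) → E)).det = ‖x - p‖ ^ 2 * (gram ℝ f).det := by
  rw [← det_gram_snoc_of_forall_inner_eq_zero f hxp]
  refine det_gram_eq_of_sub_mem_span_Iio fun i ↦ ?_
  induction i using Fin.lastCases with
  | last =>
    have hIio : Set.Iio (Fin.last n) = Set.range Fin.castSucc := by
      ext i
      simp [Fin.lt_def]
    rwa [Fin.snoc_last, Fin.snoc_last, sub_sub_cancel, hIio, ← Set.range_comp,
      Fin.snoc_comp_castSucc]
  | cast i => simp

end Matrix

theorem direction_affineSpan_range_eq_span_vsub_last {k V P : Type*} [Ring k] [AddCommGroup V]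
    [Module k V] [AddTorsor V P] {n : ℕ} (v : Fin (n + 1) → P) :
    (affineSpan k (Set.range v)).direction =
      Submodule.span k (Set.range fun i : Fin n ↦ v i.castSucc -ᵥ v (Fin.last n)) := by
  rw [direction_affineSpan, vectorSpan_range_eq_span_range_vsub_right k v (Fin.last n)]
  refine le_antisymm (Submodule.span_le.mpr ?_) (Submodule.span_mono ?_)
  · rintro _ ⟨i, rfl⟩
    induction i using Fin.lastCases with
    | last => simp
    | cast i => exact Submodule.subset_span ⟨i, rfl⟩
  · rintro _ ⟨i, rfl⟩
    exact ⟨i.castSucc, rfl⟩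

theorem AffineSubspace.inner_sub_eq_zero_of_forall_dist_le {F : Type*} [NormedAddCommGroup F]
    [InnerProductSpace ℝ F] {s : AffineSubspace ℝ F} {p q : F} (hp : p ∈ s)
    (hmin : ∀ r ∈ s, dist q p ≤ dist q r) {x : F} (hx : x ∈ s.direction) :
    ⟪x, q - p⟫ = 0 := by
  have hinf : ‖q - p - 0‖ = ⨅ w : s.direction, ‖q - p - w‖ := by
    refine le_antisymm (le_ciInf fun w ↦ ?_) (ciInf_le ⟨0, fun _ ⟨_, h⟩ ↦ h ▸ norm_nonneg _⟩ 0)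
    have h := hmin _ (AffineSubspace.vadd_mem_of_mem_direction w.2 hp)
    rw [sub_zero]
    rwa [dist_eq_norm, dist_eq_norm, vadd_eq_add, ← sub_sub, sub_right_comm] at h
  rw [real_inner_comm]
  simpa using (Submodule.norm_eq_iInf_iff_real_inner_eq_zero s.direction
    s.direction.zero_mem).mp hinf x hx

theorem det_eq_height_mul_det_face_general (m : ℕ)
    (v : Fin (m + 3) → EuclideanSpace ℝ (Fin (m + 2)))
    (Qτ : Matrix (Fin (m + 2)) (Fin (m + 2)) ℝ)
    (hQτ : ∀ i j, Qτ i j =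
      ⟪v i.castSucc - v (Fin.last (m + 2)), v j.castSucc - v (Fin.last (m + 2))⟫)
    (Qface : Matrix (Fin (m + 1)) (Fin (m + 1)) ℝ)
    (hQface : ∀ i j, Qface i j =
      ⟪v i.castSucc.castSucc - v (Fin.last (m + 1)).castSucc,
       v j.castSucc.castSucc - v (Fin.last (m + 1)).castSucc⟫)
    (p : EuclideanSpace ℝ (Fin (m + 2)))
    (hp : p ∈ affineSpan ℝ (Set.range fun i : Fin (m + 2) => v i.castSucc))
    (hmin : ∀ q ∈ affineSpan ℝ (Set.range fun i : Fin (m + 2) => v i.castSucc),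
      dist (v (Fin.last (m + 2))) p ≤ dist (v (Fin.last (m + 2))) q) :
    Qτ.det = ‖v (Fin.last (m + 2)) - p‖ ^ 2 * Qface.det := by
  set S := affineSpan ℝ (Set.range fun i : Fin (m + 2) => v i.castSucc)
  set apex := v (Fin.last (m + 2))
  set base := v (Fin.last (m + 1)).castSucc
  set f : Fin (m + 1) → EuclideanSpace ℝ (Fin (m + 2)) := fun i ↦ v i.castSucc.castSucc - base
  have hS : S.direction = Submodule.span ℝ (Set.range f) :=
    direction_affineSpan_range_eq_span_vsub_last _
  have hshift : (gram ℝ fun i : Fin (m + 2) ↦ v i.castSucc - apex).det =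
      (gram ℝ (Fin.snoc f (base - apex) : Fin (m + 2) → _)).det := by
    refine det_gram_eq_of_sub_mem_span_Ioi fun i ↦ ?_
    induction i using Fin.lastCases with
    | last => simp [base]
    | cast i =>
      refine Submodule.subset_span ⟨Fin.last _, Fin.castSucc_lt_last i, ?_⟩
      simp [f]
  have hheight : (gram ℝ (Fin.snoc f (base - apex) : Fin (m + 2) → _)).det =
      ‖p - apex‖ ^ 2 * (gram ℝ f).det := by
    have hbase : base ∈ S := mem_affineSpan ℝ ⟨Fin.last (m + 1), rfl⟩
    rw [← sub_sub_sub_cancel_left apex p base]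
    refine det_gram_snoc f (hS ▸ S.vsub_mem_direction hbase hp) fun i ↦ ?_
    rw [sub_sub_sub_cancel_left, ← neg_sub, inner_neg_right,
      S.inner_sub_eq_zero_of_forall_dist_le hp hmin (hS ▸ Submodule.subset_span ⟨i, rfl⟩),
      neg_zero]
  have hQτ' : Qτ = gram ℝ fun i : Fin (m + 2) ↦ v i.castSucc - apex := Matrix.ext hQτ
  have hQface' : Qface = gram ℝ f := Matrix.ext hQface
  rw [hQτ', hQface', hshift, hheight, norm_sub_rev]

/-- **Lemma relating Gram determinants and the height of a simplex.**
For affinely independent points `v 1, …, v (n+1)` in `ℝ^n` (`n ≥ 2`, here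
`n` is `m + 2`), with `Qτ` the Gram matrix of the edge vectors from the last
vertex and `Qface` the Gram matrix of the opposite face, and `p` the
orthogonal projection of the last vertex onto the affine span of the other
vertices (the unique closest point of that affine subspace), we have
`det Qτ = ‖v_{n+1} − p‖² · det Qface`. -/
theorem det_eq_height_mul_det_face (m : ℕ)
    (v : Fin (m + 3) → EuclideanSpace ℝ (Fin (m + 2)))
    (hv : AffineIndependent ℝ v)
    (Qτ : Matrix (Fin (m + 2)) (Fin (m + 2)) ℝ)
    (hQτ : ∀ i j, Qτ i j =
      ⟪v i.castSucc - v (Fin.last (m + 2)), v j.castSucc - v (Fin.last (m + 2))⟫)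
    (Qface : Matrix (Fin (m + 1)) (Fin (m + 1)) ℝ)
    (hQface : ∀ i j, Qface i j =
      ⟪v i.castSucc.castSucc - v (Fin.last (m + 1)).castSucc,
       v j.castSucc.castSucc - v (Fin.last (m + 1)).castSucc⟫)
    (p : EuclideanSpace ℝ (Fin (m + 2)))
    (hp : p ∈ affineSpan ℝ (Set.range fun i : Fin (m + 2) => v i.castSucc))
    (hmin : ∀ q ∈ affineSpan ℝ (Set.range fun i : Fin (m + 2) => v i.castSucc),
      dist (v (Fin.last (m + 2))) p ≤ dist (v (Fin.last (m + 2))) q) :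
    Qτ.det = ‖v (Fin.last (m + 2)) - p‖ ^ 2 * Qface.det :=
  det_eq_height_mul_det_face_general m v Qτ hQτ Qface hQface p hp hmin
end

section
/- Let v_1, …, v_{n+1} be affinely independent points in Euclidean space ℝ^n (n ≥ 2). Let Q be the n×n Gram matrix with entries Q_{ij} = ⟨v_i − v_{n+1}, v_j − v_{n+1}⟩ for 1 ≤ i, j ≤ n, let Q_{ij} denote its ij-th minor (the determinant of the matrix obtained by deleting row i and column j of Q), and let Q_{τ_{n+1}} be the (n−1)×(n−1) Gram matrix of the face with vertices v_1, …, v_n, namely (Q_{τ_{n+1}})_{ij} = ⟨v_i − v_n, v_j − v_n⟩. Then Σ_{i=1}^n Σ_{j=1}^n (−1)^{i+j} Q_{ij} = det(Q_{τ_{n+1}}). -/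
open Finset Matrix

/-- Sum of all signed minors (cofactors) of an `(n+1)×(n+1)` matrix equals the determinant
of the matrix obtained by "recentering" at the last index. -/
theorem cofactor_sum_eq {n : ℕ} (Q : Matrix (Fin (n + 1)) (Fin (n + 1)) ℝ) :
    ∑ i : Fin (n + 1), ∑ j : Fin (n + 1), (-1 : ℝ) ^ ((i : ℕ) + (j : ℕ)) *
      (Q.submatrix i.succAbove j.succAbove).det =
    (Matrix.of fun i j : Fin n =>
      Q i.castSucc j.castSucc - Q i.castSucc (Fin.last n)
        - Q (Fin.last n) j.castSucc + Q (Fin.last n) (Fin.last n)).det := by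
  set E : Matrix (Fin (n + 1)) (Fin (n + 1)) ℝ :=
    Matrix.of fun i j => if j = Fin.last n ∧ i ≠ Fin.last n then 1 else 0 with hE
  have hEE : E * E = 0 := by
    ext a b
    rw [Matrix.mul_apply, Matrix.zero_apply]
    refine Finset.sum_eq_zero fun k _ => ?_
    by_cases hk : k = Fin.last n
    · simp [hE, hk]
    · simp [hE, hk]
  set C : Matrix (Fin (n + 1)) (Fin (n + 1)) ℝ := 1 - E with hC
  set D : Matrix (Fin (n + 1)) (Fin (n + 1)) ℝ := 1 + E with hD
  have hCD : C * D = 1 := by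
    have h : C * D = 1 - E * E := by rw [hC, hD]; noncomm_ring
    rw [h, hEE, sub_zero]
  have hdetC : C.det = 1 := by
    have htri : C.BlockTriangular id := by
      intro i j hij
      have hij' : j < i := hij
      have h1 : (1 : Matrix (Fin (n+1)) (Fin (n+1)) ℝ) i j = 0 :=
        Matrix.one_apply_ne (ne_of_gt hij')
      have h2 : E i j = 0 := by
        have : j ≠ Fin.last n := by
          intro h
          exact absurd (h ▸ hij') (not_lt.mpr (Fin.le_last i))
        simp [hE, this]
      simp [hC, h1, h2]
    rw [Matrix.det_of_upperTriangular htri]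
    refine Finset.prod_eq_one fun i _ => ?_
    simp [hC, hE, Matrix.one_apply]
  have hadjC : Matrix.adjugate C = D := by
    calc Matrix.adjugate C = Matrix.adjugate C * (C * D) := by rw [hCD, mul_one]
    _ = (Matrix.adjugate C * C) * D := by rw [mul_assoc]
    _ = (C.det • (1 : Matrix (Fin (n+1)) (Fin (n+1)) ℝ)) * D := by rw [Matrix.adjugate_mul]
    _ = D := by rw [hdetC, one_smul, one_mul]
  set M : Matrix (Fin (n + 1)) (Fin (n + 1)) ℝ := C * Q * Cᵀ with hM
  have hadjM : Matrix.adjugate M = Dᵀ * (Matrix.adjugate Q * D) := by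
    rw [hM, Matrix.adjugate_mul_distrib, Matrix.adjugate_mul_distrib,
      ← Matrix.adjugate_transpose, hadjC]
  have hDlast : ∀ i, D i (Fin.last n) = 1 := by
    intro i
    by_cases h : i = Fin.last n <;> simp [hD, hE, Matrix.one_apply, h]
  -- LHS equals the (last, last) entry of adjugate M
  have hLHS : ∑ i : Fin (n + 1), ∑ j : Fin (n + 1), (-1 : ℝ) ^ ((i : ℕ) + (j : ℕ)) *
      (Q.submatrix i.succAbove j.succAbove).det
      = Matrix.adjugate M (Fin.last n) (Fin.last n) := by
    rw [hadjM, Matrix.mul_apply]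
    rw [Finset.sum_comm]
    refine Finset.sum_congr rfl fun i _ => ?_
    rw [Matrix.transpose_apply, hDlast i, one_mul, Matrix.mul_apply]
    refine Finset.sum_congr rfl fun j _ => ?_
    rw [hDlast j, mul_one, Matrix.adjugate_fin_succ_eq_det_submatrix]
  rw [hLHS, Matrix.adjugate_fin_succ_eq_det_submatrix]
  have hsign : ((-1 : ℝ)) ^ (((Fin.last n : Fin (n+1)) : ℕ) + ((Fin.last n : Fin (n+1)) : ℕ)) = 1 :=
    Even.neg_one_pow ⟨n, rfl⟩
  rw [hsign, one_mul]
  congr 1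
  ext i j
  have hi : i.castSucc ≠ Fin.last n := (Fin.castSucc_lt_last i).ne
  have hj : j.castSucc ≠ Fin.last n := (Fin.castSucc_lt_last j).ne
  have hEQ : ∀ (X : Matrix (Fin (n+1)) (Fin (n+1)) ℝ) (a b : Fin (n+1)), a ≠ Fin.last n →
      (E * X) a b = X (Fin.last n) b := by
    intro X a b ha
    rw [Matrix.mul_apply]
    rw [Finset.sum_eq_single (Fin.last n)]
    · simp [hE, ha]
    · intro k _ hk; simp [hE, hk]
    · intro h; exact absurd (Finset.mem_univ _) h
  have hXE : ∀ (X : Matrix (Fin (n+1)) (Fin (n+1)) ℝ) (a b : Fin (n+1)), b ≠ Fin.last n →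
      (X * Eᵀ) a b = X a (Fin.last n) := by
    intro X a b hb
    rw [Matrix.mul_apply]
    rw [Finset.sum_eq_single (Fin.last n)]
    · simp [hE, hb]
    · intro k _ hk; simp [hE, hk]
    · intro h; exact absurd (Finset.mem_univ _) h
  have hCQ : ∀ b : Fin (n+1), (C * Q) i.castSucc b = Q i.castSucc b - Q (Fin.last n) b := by
    intro b
    rw [hC, sub_mul, one_mul, Matrix.sub_apply, hEQ Q _ _ hi]
  have hCT : Cᵀ = 1 - Eᵀ := by rw [hC, Matrix.transpose_sub, Matrix.transpose_one]
  rw [Matrix.submatrix_apply, Fin.succAbove_last, hM, hCT, mul_sub, mul_one, Matrix.sub_apply,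
    hXE (C * Q) _ _ hj, hCQ, hCQ]
  simp only [Matrix.of_apply]
  ring

open scoped RealInnerProductSpace

/-- **Alternating sum of minors equals the Gram determinant of the face.**
For affinely independent points `v 1, …, v (n+1)` in `ℝ^n` (`n ≥ 2`, here
`n` is `m + 2`), with `Q` the Gram matrix of the edge vectors from the last
vertex and `Qface` the Gram matrix of the opposite face,
`∑ i ∑ j (−1)^(i+j) Q_{ij} = det Qface`, where `Q_{ij}` is the `ij`-th
minor of `Q`. -/
theorem sum_minors_eq_det_face (m : ℕ)
    (v : Fin (m + 3) → EuclideanSpace ℝ (Fin (m + 2)))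
    (hv : AffineIndependent ℝ v)
    (Q : Matrix (Fin (m + 2)) (Fin (m + 2)) ℝ)
    (hQ : ∀ i j, Q i j =
      ⟪v i.castSucc - v (Fin.last (m + 2)), v j.castSucc - v (Fin.last (m + 2))⟫)
    (Qface : Matrix (Fin (m + 1)) (Fin (m + 1)) ℝ)
    (hQface : ∀ i j, Qface i j =
      ⟪v i.castSucc.castSucc - v (Fin.last (m + 1)).castSucc,
       v j.castSucc.castSucc - v (Fin.last (m + 1)).castSucc⟫) :
    ∑ i : Fin (m + 2), ∑ j : Fin (m + 2), (-1 : ℝ) ^ ((i : ℕ) + (j : ℕ)) *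
      (Q.submatrix i.succAbove j.succAbove).det = Qface.det := by
  rw [cofactor_sum_eq Q]
  congr 1
  ext i j
  rw [Matrix.of_apply, hQface, hQ, hQ, hQ, hQ]
  have h1 : v i.castSucc.castSucc - v (Fin.last (m + 1)).castSucc =
      (v i.castSucc.castSucc - v (Fin.last (m + 2))) -
        (v (Fin.last (m + 1)).castSucc - v (Fin.last (m + 2))) := by
    rw [sub_sub_sub_cancel_right]
  have h2 : v j.castSucc.castSucc - v (Fin.last (m + 1)).castSucc =
      (v j.castSucc.castSucc - v (Fin.last (m + 2))) -
        (v (Fin.last (m + 1)).castSucc - v (Fin.last (m + 2))) := by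
    rw [sub_sub_sub_cancel_right]
  rw [h1, h2]
  simp only [inner_sub_left, inner_sub_right]
  ring
end

section
/- Let v_1, …, v_{n+1} be affinely independent points in Euclidean space ℝ^n (n ≥ 2). Let Q be the n×n Gram matrix with entries Q_{ij} = ⟨v_i − v_{n+1}, v_j − v_{n+1}⟩ for 1 ≤ i, j ≤ n, and let Q_{ij} denote its ij-th minor (the determinant of the matrix obtained by deleting row i and column j of Q). Then the orthogonal projection p of v_{n+1} onto the affine span of {v_1, …, v_n} is p = Σ_{i=1}^n α_i v_i with α_i = ( Σ_{j=1}^n (−1)^{i+j} Q_{ij} ) / ( Σ_{j=1}^n Σ_{k=1}^n (−1)^{j+k} Q_{jk} ). -/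
open Finset Matrix
open scoped RealInnerProductSpace

/-!
Write `p = ∑ wᵢ vᵢ` with `∑ wᵢ = 1`. Since `v_{n+1} - p` is orthogonal to the face, every
`⟪vᵢ - v_{n+1}, p - v_{n+1}⟫` equals `‖p - v_{n+1}‖²`, i.e. `Q w` is a constant vector. As a Gram
matrix of linearly independent vectors `Q` is nonsingular, so `w` is proportional to `adj Q · 𝟙`,
whose entries are the signed row sums of minors because `Q` is symmetric; `∑ wᵢ = 1` fixes the
constant of proportionality.
-/

theorem AffineIndependent.linearIndependent_succAbove_vsub {k V P : Type*} [Ring k]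
    [AddCommGroup V] [Module k V] [AddTorsor V P] {n : ℕ} {p : Fin (n + 1) → P}
    (hp : AffineIndependent k p) (j : Fin (n + 1)) :
    LinearIndependent k fun i : Fin n => p (j.succAbove i) -ᵥ p j :=
  ((affineIndependent_iff_linearIndependent_vsub k p j).1 hp).comp
    (fun i => ⟨j.succAbove i, Fin.succAbove_ne j i⟩)
    fun _ _ h => Fin.succAbove_right_injective (congrArg Subtype.val h)

theorem EuclideanGeometry.vsub_mem_direction_orthogonal_of_forall_dist_le {𝕜 V P : Type*}
    [RCLike 𝕜] [NormedAddCommGroup V] [InnerProductSpace 𝕜 V] [MetricSpace P]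
    [NormedAddTorsor V P] {s : AffineSubspace 𝕜 P} [s.direction.HasOrthogonalProjection]
    {u p : P} (hp : p ∈ s) (hmin : ∀ q ∈ s, dist u p ≤ dist u q) :
    u -ᵥ p ∈ s.directionᗮ := by
  have : Nonempty s := ⟨⟨p, hp⟩⟩
  have hproj : (orthogonalProjection s u : P) = p := by
    refine (dist_orthogonalProjection_eq_dist_iff_eq_of_mem hp).1 (le_antisymm ?_ ?_)
    · rw [dist_orthogonalProjection_eq_infDist]
      exact Metric.infDist_le_dist_of_mem hp
    · exact hmin _ (orthogonalProjection_mem u)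
  exact hproj ▸ vsub_orthogonalProjection_mem_direction_orthogonal s u

theorem Matrix.gram_sub_mulVec_eq_const {F ι : Type*} [NormedAddCommGroup F] [InnerProductSpace ℝ F]
    [Fintype ι] {x : ι → F} {o p : F} {w : ι → ℝ} (hw : ∑ i, w i = 1)
    (hp : p = ∑ i, w i • x i) (horth : ∀ i, ⟪x i - p, o - p⟫ = 0) :
    gram ℝ (fun i => x i - o) *ᵥ w = Function.const ι (‖p - o‖ ^ 2) := by
  have hpo : ∑ j, w j • (x j - o) = p - o := by
    simp only [smul_sub, Finset.sum_sub_distrib, ← Finset.sum_smul, hw, one_smul, hp]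
  funext i
  calc (gram ℝ (fun i => x i - o) *ᵥ w) i = ⟪x i - o, ∑ j, w j • (x j - o)⟫ := by
        simp [mulVec, dotProduct, gram_apply, inner_sum, real_inner_smul_right, mul_comm]
    _ = ⟪(x i - p) - (o - p), p - o⟫ := by rw [hpo]; congr 1; abel
    _ = ‖p - o‖ ^ 2 := by
        rw [inner_sub_left, show p - o = -(o - p) by abel]
        simp only [inner_neg_right, horth, real_inner_self_eq_norm_sq, norm_neg]
        ring

theorem Matrix.eq_adjugate_mulVec_one_div_of_mulVec_eq_const {K n : Type*} [Field K]
    [Fintype n] [DecidableEq n] {A : Matrix n n K} (hA : A.det ≠ 0) {w : n → K} {c : K}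
    (hw : A *ᵥ w = Function.const n c) (hsum : ∑ i, w i = 1) (i : n) :
    w i = (A.adjugate *ᵥ 1) i / ∑ j, (A.adjugate *ᵥ 1) j := by
  set u := A.adjugate *ᵥ 1
  have hdet_w : A.det • w = c • u := by
    calc A.det • w = A.adjugate *ᵥ (A *ᵥ w) := by
          rw [mulVec_mulVec, adjugate_mul, smul_mulVec, one_mulVec]
      _ = c • u := by
          rw [hw, ← mulVec_smul]
          congr 1
          ext
          simp
  have hdet_sum : A.det = c * ∑ j, u j := by
    simpa [← Finset.mul_sum, hsum] using congrArg (fun v => ∑ j, v j) hdet_w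
  have hu_sum : ∑ j, u j ≠ 0 := fun h => hA (by rw [hdet_sum, h, mul_zero])
  rw [eq_div_iff hu_sum]
  apply mul_left_cancel₀ hA
  have := congrFun hdet_w i
  simp only [Pi.smul_apply, smul_eq_mul] at this
  rw [← mul_assoc, this, hdet_sum]
  ring

theorem Matrix.IsSymm.adjugate_mulVec_one_apply {R : Type*} [CommRing R] {k : ℕ}
    {A : Matrix (Fin (k + 1)) (Fin (k + 1)) R} (hA : A.IsSymm) (i : Fin (k + 1)) :
    (A.adjugate *ᵥ 1) i =
      ∑ j : Fin (k + 1),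
        (-1 : R) ^ ((i : ℕ) + (j : ℕ)) * (A.submatrix i.succAbove j.succAbove).det := by
  have hadj : A.adjugate.IsSymm := by
    rw [IsSymm, adjugate_transpose, hA.eq]
  simp only [mulVec, dotProduct, Pi.one_apply, mul_one]
  exact Finset.sum_congr rfl fun j _ =>
    (hadj.apply i j).symm.trans (adjugate_fin_succ_eq_det_submatrix A j i)

/-- **Orthogonal projection in Euclidean simplices (intrinsic form).**
For affinely independent points `v 1, …, v (n+1)` in `ℝ^n` (`n ≥ 2`, here
`n` is `m + 2`), with `Q` the Gram matrix of the edge vectors from the last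
vertex, the orthogonal projection `p` of the last vertex onto the affine
span of the other vertices is `p = ∑ i, α i • v i` with
`α i = (∑ j, (−1)^(i+j) Q_{ij}) / (∑ j ∑ k, (−1)^(j+k) Q_{jk})`,
where `Q_{ij}` is the `ij`-th minor of `Q`. -/
theorem euclidean_projection_normalized (m : ℕ)
    (v : Fin (m + 3) → EuclideanSpace ℝ (Fin (m + 2)))
    (hv : AffineIndependent ℝ v)
    (Q : Matrix (Fin (m + 2)) (Fin (m + 2)) ℝ)
    (hQ : ∀ i j, Q i j =
      ⟪v i.castSucc - v (Fin.last (m + 2)), v j.castSucc - v (Fin.last (m + 2))⟫)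
    (p : EuclideanSpace ℝ (Fin (m + 2)))
    (hp : p ∈ affineSpan ℝ (Set.range fun i : Fin (m + 2) => v i.castSucc))
    (hmin : ∀ q ∈ affineSpan ℝ (Set.range fun i : Fin (m + 2) => v i.castSucc),
      dist (v (Fin.last (m + 2))) p ≤ dist (v (Fin.last (m + 2))) q)
    (α : Fin (m + 2) → ℝ)
    (hα : ∀ i, α i =
      (∑ j : Fin (m + 2), (-1 : ℝ) ^ ((i : ℕ) + (j : ℕ)) *
        (Q.submatrix i.succAbove j.succAbove).det) /
      (∑ j : Fin (m + 2), ∑ k : Fin (m + 2), (-1 : ℝ) ^ ((j : ℕ) + (k : ℕ)) *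
        (Q.submatrix j.succAbove k.succAbove).det)) :
    p = ∑ i : Fin (m + 2), α i • v i.castSucc := by
  set o := v (Fin.last (m + 2))
  set S := affineSpan ℝ (Set.range fun i : Fin (m + 2) => v i.castSucc)
  obtain ⟨w, hw, hpw⟩ := eq_affineCombination_of_mem_affineSpan_of_fintype hp
  rw [affineCombination_eq_linear_combination _ _ _ hw] at hpw
  have hperp : o - p ∈ S.directionᗮ :=
    EuclideanGeometry.vsub_mem_direction_orthogonal_of_forall_dist_le hp hmin
  have hQ_gram : Q = gram ℝ (fun i => v i.castSucc - o) := Matrix.ext hQ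
  have hdet : Q.det ≠ 0 := by
    rw [hQ_gram, det_gram_ne_zero_iff_linearIndependent]
    simpa using hv.linearIndependent_succAbove_vsub (Fin.last _)
  have hQw : Q *ᵥ w = Function.const _ (‖p - o‖ ^ 2) :=
    hQ_gram ▸ gram_sub_mulVec_eq_const hw hpw fun i =>
      Submodule.inner_right_of_mem_orthogonal
        (AffineSubspace.vsub_mem_direction (mem_affineSpan ℝ (Set.mem_range_self i)) hp) hperp
  have hQ_symm : Q.IsSymm := IsSymm.ext fun i j => by rw [hQ, hQ, real_inner_comm]
  have hαw : α = w := funext fun i => by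
    rw [hα, eq_adjugate_mulVec_one_div_of_mulVec_eq_const hdet hQw hw i]
    simp only [hQ_symm.adjugate_mulVec_one_apply]
  rw [hpw, hαw]
end

section
/- Let v_1, …, v_{n+1} be points in Euclidean space ℝ^n, and let Q be the n×n Gram matrix with entries Q_{ij} = ⟨v_i − v_{n+1}, v_j − v_{n+1}⟩ for 1 ≤ i, j ≤ n. Then the n-dimensional Lebesgue measure of the convex hull of {v_1, …, v_{n+1}} equals √(det Q) / n!. -/
/-!
With `T` the linear map sending `eᵢ` to `vᵢ - v_{n+1}`, the simplex is the translate by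
`v_{n+1}` of the image under `T` of the corner simplex
`conv {0, e₁, …, eₙ} = {x ≥ 0, ∑ xᵢ ≤ 1}`.
Lebesgue measure scales by `|det T|` under `T`, and `|det T|² = det (Tᵀ T) = det Q`.
The corner simplex has volume `1 / n!`: slicing along the first coordinate, the slice at height
`t` is the corner simplex of size `1 - t` in one dimension less, and Fubini gives the recursion
`∫₀ᶜ (c - t)ⁿ / n! dt = cⁿ⁺¹ / (n + 1)!`.
-/

open Finset MeasureTheory Set
open scoped RealInnerProductSpace Nat Pointwise

def cornerSimplex (ι : Type*) [Fintype ι] (c : ℝ) : Set (ι → ℝ) :=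
  {x | (∀ i, 0 ≤ x i) ∧ ∑ i, x i ≤ c}

section
variable {ι : Type*} [Fintype ι]

theorem convex_cornerSimplex (c : ℝ) : Convex ℝ (cornerSimplex ι c) := by
  rintro x ⟨hx₀, hx⟩ y ⟨hy₀, hy⟩ a b ha hb hab
  refine ⟨fun i => ?_, ?_⟩
  · simp only [Pi.add_apply, Pi.smul_apply, smul_eq_mul]
    have := hx₀ i; have := hy₀ i; positivity
  · simp only [Pi.add_apply, Pi.smul_apply, smul_eq_mul, sum_add_distrib, ← mul_sum]
    calc _ ≤ a * c + b * c :=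
          add_le_add (mul_le_mul_of_nonneg_left hx ha) (mul_le_mul_of_nonneg_left hy hb)
      _ = c := by rw [← add_mul, hab, one_mul]

theorem isClosed_cornerSimplex (c : ℝ) : IsClosed (cornerSimplex ι c) := by
  simp only [cornerSimplex, ofPred_and, ofPred_forall]
  exact (isClosed_iInter fun i => isClosed_le continuous_const (continuous_apply i)).inter
    (isClosed_le (continuous_finsetSum _ fun i _ => continuous_apply i) continuous_const)

theorem cornerSimplex_eq_empty {c : ℝ} (hc : c < 0) : cornerSimplex ι c = ∅ :=
  eq_empty_of_forall_notMem fun _ ⟨hx₀, hx⟩ =>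
    (hc.trans_le (sum_nonneg fun i _ => hx₀ i)).not_ge hx

end

theorem cons_mem_cornerSimplex_iff {n : ℕ} {c t : ℝ} {y : Fin n → ℝ} :
    Fin.cons t y ∈ cornerSimplex (Fin (n + 1)) c ↔
      0 ≤ t ∧ y ∈ cornerSimplex (Fin n) (c - t) := by
  simp only [cornerSimplex, mem_ofPred_eq, Fin.forall_fin_succ, Fin.sum_univ_succ,
    Fin.cons_zero, Fin.cons_succ, le_sub_iff_add_le', and_assoc]

theorem setLIntegral_Icc_sub_pow_div_factorial (n : ℕ) {c : ℝ} (hc : 0 ≤ c) :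
    ∫⁻ t in Icc 0 c, ENNReal.ofReal ((c - t) ^ n / n !) =
      ENNReal.ofReal (c ^ (n + 1) / (n + 1)!) := by
  rw [← ofReal_integral_eq_lintegral_ofReal, integral_Icc_eq_integral_Ioc,
    ← intervalIntegral.integral_of_le hc]
  · congr 1
    rw [intervalIntegral.integral_div, intervalIntegral.integral_comp_sub_left (· ^ n) c]
    rw [sub_self, sub_zero, integral_pow, zero_pow n.succ_ne_zero, sub_zero, Nat.factorial_succ]
    push_cast
    field_simp
  · exact (by fun_prop : Continuous fun t : ℝ => (c - t) ^ n / n !).integrableOn_Icc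
  · filter_upwards [ae_restrict_mem measurableSet_Icc] with t ht
    have := sub_nonneg.2 ht.2
    positivity

theorem volume_cornerSimplex (n : ℕ) {c : ℝ} (hc : 0 ≤ c) :
    volume (cornerSimplex (Fin n) c) = ENNReal.ofReal (c ^ n / n !) := by
  induction n generalizing c with
  | zero => simp [cornerSimplex, hc, volume_pi]
  | succ n ih =>
    let e := MeasurableEquiv.piFinSuccAbove (fun _ : Fin (n + 1) => ℝ) 0
    have hslice (t : ℝ) :
        volume (Prod.mk t ⁻¹' (e.symm ⁻¹' cornerSimplex (Fin (n + 1)) c)) =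
          (Icc 0 c).indicator (fun t => ENNReal.ofReal ((c - t) ^ n / n !)) t := by
      have hslice_eq : Prod.mk t ⁻¹' (e.symm ⁻¹' cornerSimplex (Fin (n + 1)) c) =
          {y | 0 ≤ t ∧ y ∈ cornerSimplex (Fin n) (c - t)} := by
        ext y
        simp only [Set.mem_preimage, mem_ofPred_eq, e, MeasurableEquiv.piFinSuccAbove_symm_apply,
          Fin.insertNthEquiv_zero]
        exact cons_mem_cornerSimplex_iff
      rw [hslice_eq]
      by_cases ht : t ∈ Icc 0 c
      · simp only [ht.1, true_and, ofPred_mem_eq, ih (sub_nonneg.2 ht.2), indicator_of_mem ht]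
      · rw [indicator_of_notMem ht]
        rcases not_and_or.1 ht with ht₀ | htc
        · simp [ht₀]
        · simp [cornerSimplex_eq_empty (sub_neg.2 (not_le.1 htc))]
    calc volume (cornerSimplex (Fin (n + 1)) c)
        = volume (e.symm ⁻¹' cornerSimplex (Fin (n + 1)) c) :=
          ((volume_preserving_piFinSuccAbove _ 0).symm.measure_preimage_equiv _).symm
      _ = ∫⁻ t, volume (Prod.mk t ⁻¹' (e.symm ⁻¹' cornerSimplex (Fin (n + 1)) c)) :=
          Measure.prod_apply ((isClosed_cornerSimplex c).measurableSet.preimage e.symm.measurable)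
      _ = ∫⁻ t in Icc 0 c, ENNReal.ofReal ((c - t) ^ n / n !) := by
          simp_rw [hslice]; exact lintegral_indicator measurableSet_Icc _
      _ = ENNReal.ofReal (c ^ (n + 1) / (n + 1)!) := setLIntegral_Icc_sub_pow_div_factorial n hc

theorem convexHull_insert_zero_range_basis {ι M : Type*} [Fintype ι] [AddCommGroup M]
    [Module ℝ M] (b : Module.Basis ι ℝ M) :
    convexHull ℝ (insert 0 (range b)) = b.equivFun ⁻¹' cornerSimplex ι 1 := by
  refine Subset.antisymm (convexHull_min ?_
    ((convex_cornerSimplex 1).linear_preimage b.equivFun.toLinearMap)) ?_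
  · refine insert_subset_iff.2 ⟨by simp [cornerSimplex], range_subset_iff.2 fun i => ?_⟩
    simpa [cornerSimplex] using fun j => Finsupp.single_nonneg.2 zero_le_one j
  · rintro x ⟨hx₀, hx⟩
    have := (convex_convexHull ℝ (insert 0 (range b))).sum_mem (t := univ)
      (w := fun o : Option ι => o.elim (1 - ∑ i, b.equivFun x i) (b.equivFun x))
      (z := fun o : Option ι => o.elim 0 b)
      (by rintro (_ | i) -; exacts [sub_nonneg.2 hx, hx₀ i])
      (by simp)
      (by rintro (_ | i) - <;> apply subset_convexHull <;> simp)
    simpa [Fintype.sum_option, b.sum_equivFun] using this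

theorem volume_convexHull_insert_zero_range_basisFun (n : ℕ) :
    volume (convexHull ℝ (insert 0 (range (EuclideanSpace.basisFun (Fin n) ℝ)))) =
      ENNReal.ofReal (1 / n !) := by
  rw [← OrthonormalBasis.coe_toBasis, convexHull_insert_zero_range_basis,
    EuclideanSpace.basisFun_toBasis, PiLp.basisFun_equivFun, WithLp.coe_linearEquiv,
    (PiLp.volume_preserving_ofLp (Fin n)).measure_preimage
    (isClosed_cornerSimplex 1).measurableSet.nullMeasurableSet, volume_cornerSimplex n zero_le_one,
    one_pow]

theorem convexHull_range_eq_vadd_image_convexHull {E F : Type*} [AddCommGroup E] [Module ℝ E]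
    [AddCommGroup F] [Module ℝ F] {n : ℕ} (v : Fin (n + 1) → F) (f : E →ₗ[ℝ] F)
    (e : Fin n → E) (hf : ∀ i, f (e i) = v i.castSucc - v (Fin.last n)) :
    convexHull ℝ (range v) = v (Fin.last n) +ᵥ f '' convexHull ℝ (insert 0 (range e)) := by
  rw [LinearMap.image_convexHull, ← convexHull_vadd, image_insert_eq, map_zero, vadd_set_insert,
    vadd_eq_add, add_zero, ← range_comp, ← Set.image_vadd, ← range_comp]
  conv_lhs => rw [← Fin.snoc_init_self v, Fin.range_snoc]
  congr 3
  funext i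
  simp [hf, Fin.init]

theorem LinearMap.abs_det_eq_sqrt_det_gram {ι E : Type*} [Fintype ι] [DecidableEq ι]
    [NormedAddCommGroup E] [InnerProductSpace ℝ E] [FiniteDimensional ℝ E] (f : E →ₗ[ℝ] E)
    (b : OrthonormalBasis ι ℝ E) :
    |LinearMap.det f| = √(Matrix.gram ℝ (f <| b ·)).det := by
  rw [← f.normDet_eq_abs_det, ← f.normDet_sq_eq_det_gram b]
  simp [Real.sqrt_sq f.normDet_nonneg]

/-- **Volume of a Euclidean simplex.**
For points `v 1, …, v (n+1)` in `ℝ^n` with `Q` the Gram matrix of the edge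
vectors from the last vertex, the `n`-dimensional Lebesgue measure of the
convex hull of the `v i` equals `√(det Q) / n!`. -/
theorem simplex_volume (n : ℕ)
    (v : Fin (n + 1) → EuclideanSpace ℝ (Fin n))
    (Q : Matrix (Fin n) (Fin n) ℝ)
    (hQ : ∀ i j, Q i j =
      ⟪v i.castSucc - v (Fin.last n), v j.castSucc - v (Fin.last n)⟫) :
    volume (convexHull ℝ (Set.range v)) =
      ENNReal.ofReal (Real.sqrt Q.det / (Nat.factorial n)) := by
  let b := EuclideanSpace.basisFun (Fin n) ℝ
  let T := b.toBasis.constr ℝ fun i => v i.castSucc - v (Fin.last n)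
  have hT (i : Fin n) : T (b i) = v i.castSucc - v (Fin.last n) := by
    simpa only [OrthonormalBasis.coe_toBasis] using b.toBasis.constr_basis ℝ _ i
  have hQT : Q = Matrix.gram ℝ (T <| b ·) :=
    Matrix.ext fun i j => by simp [hQ, hT, Matrix.gram_apply]
  rw [convexHull_range_eq_vadd_image_convexHull v T b hT, measure_vadd,
    Measure.addHaar_image_linearMap,
    volume_convexHull_insert_zero_range_basisFun, T.abs_det_eq_sqrt_det_gram b, ← hQT,
    ← ENNReal.ofReal_mul (Real.sqrt_nonneg _), mul_one_div]
end
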